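/- Let V be a finite-dimensional complex vector space, let N be a nilpotent linear endomorphism of V, and let T be a bijective linear endomorphism of V. Then T ∈ Col(N) if and only if for every x ∈ V there exists a linear endomorphism C of V commuting with N such that T((N)_x) = C((N)_x), i.e., the image of the cyclic subspace (N)_x under T equals its image under C. -/

import Mathlib

open Submodule

/-- A subspace `M` is invariant under the endomorphism `A`. -/
def InvSub {V : Type*} [AddCommGroup V] [Module ℂ V] (A : V →ₗ[ℂ] V)
    (M : Submodule ℂ V) : Prop :=
  M.map A ≤ M

/-- `T ∈ Col(A)`: `T` is bijective and a subspace is `A`-invariant iff its image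
under `T` is `A`-invariant. -/
def Col {V : Type*} [AddCommGroup V] [Module ℂ V] (A T : V →ₗ[ℂ] V) : Prop :=
  Function.Bijective T ∧ ∀ M : Submodule ℂ V, InvSub A M ↔ InvSub A (M.map T)

/-- The cyclic subspace `(A)_x`, i.e. the span of `{A^n x : n ≥ 0}`. -/
def cyc {V : Type*} [AddCommGroup V] [Module ℂ V] (A : V →ₗ[ℂ] V) (x : V) :
    Submodule ℂ V :=
  Submodule.span ℂ (Set.range fun n : ℕ => (A ^ n) x)

/-!
Both sides of the equivalence amount to `T (N)_v = (N)_{T v}` for every `v`. For `Col` this holds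
because `(N)_v` is the least invariant subspace containing `v`. Conversely, `T (N)_v = C (N)_v` is
cyclic, and the invariant subspaces of a cyclic subspace `(N)_w` form the chain
`(N)_w ⊋ (N)_{N w} ⊋ ⋯` (a Nakayama argument for the nilpotent `N`), so comparing dimensions
shows that `T v` generates it.

Once `T` preserves cyclic subspaces, it preserves the kernels and the ranges of the powers of `N`,
so `T x` has at least the heights of `x`: `N^i x ∈ range N^j → N^i (T x) ∈ range N^j`. As in
Kaplansky's theorem for modules over a discrete valuation ring, this suffices for some `C`
commuting with `N` to send `x` to `T x` (induction along `x, N x, N² x, …` reduces it to the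
case `N (T x) = 0`), and then `T (N)_x = (N)_{T x} = C (N)_x`.
-/

open Module

open Finset in
theorem commute_sum_antidiagonal_pow_mul_pow {R : Type*} [Semiring R] (a e : R) (n : ℕ)
    (h₁ : a ^ (n + 1) * e = 0) (h₂ : e * a ^ (n + 1) = 0) :
    Commute a (∑ p ∈ antidiagonal n, a ^ p.1 * e * a ^ p.2) := by
  have hl := Nat.sum_antidiagonal_succ (n := n) (f := fun p => a ^ p.1 * e * a ^ p.2)
  have hr := Nat.sum_antidiagonal_succ' (n := n) (f := fun p => a ^ p.1 * e * a ^ p.2)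
  simp only [pow_zero, one_mul, mul_one, h₁, h₂, zero_add] at hl hr
  calc a * ∑ p ∈ antidiagonal n, a ^ p.1 * e * a ^ p.2
      = ∑ p ∈ antidiagonal n, a ^ (p.1 + 1) * e * a ^ p.2 := by
        simp only [mul_sum, pow_succ', mul_assoc]
    _ = ∑ p ∈ antidiagonal n, a ^ p.1 * e * a ^ (p.2 + 1) := hl.symm.trans hr
    _ = (∑ p ∈ antidiagonal n, a ^ p.1 * e * a ^ p.2) * a := by
        simp only [sum_mul, pow_succ, mul_assoc]

section Cyclic

variable {V : Type*} [AddCommGroup V] [Module ℂ V] {N : V →ₗ[ℂ] V}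

lemma invSub_bot : InvSub N ⊥ := by
  simp [InvSub]

lemma InvSub.sup {A B : Submodule ℂ V} (hA : InvSub N A) (hB : InvSub N B) :
    InvSub N (A ⊔ B) := by
  rw [InvSub, Submodule.map_sup]
  exact sup_le_sup hA hB

lemma InvSub.pow_apply_mem {M : Submodule ℂ V} (hM : InvSub N M) {x : V} (hx : x ∈ M)
    (n : ℕ) :
    (N ^ n) x ∈ M := by
  induction n with
  | zero => simpa using hx
  | succ n ih =>
    rw [pow_succ', Module.End.mul_apply]
    exact hM (mem_map_of_mem ih)

lemma Commute.apply_mem_range_pow {C : V →ₗ[ℂ] V} (h : Commute C N) {x : V} {j : ℕ}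
    (hx : x ∈ LinearMap.range (N ^ j)) : C x ∈ LinearMap.range (N ^ j) := by
  obtain ⟨y, rfl⟩ := hx
  exact ⟨C y, (LinearMap.congr_fun (h.pow_right j).eq y).symm⟩

lemma invSub_range_pow (j : ℕ) : InvSub N (LinearMap.range (N ^ j)) := by
  rintro _ ⟨x, hx, rfl⟩
  exact (Commute.refl N).apply_mem_range_pow hx

variable (N) in
lemma pow_apply_mem_cyc (x : V) (n : ℕ) : (N ^ n) x ∈ cyc N x :=
  subset_span ⟨n, rfl⟩

variable (N) in
lemma mem_cyc_self (x : V) : x ∈ cyc N x := by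
  simpa using pow_apply_mem_cyc N x 0

lemma cyc_le_iff {M : Submodule ℂ V} (hM : InvSub N M) {x : V} : cyc N x ≤ M ↔ x ∈ M :=
  ⟨fun h => h (mem_cyc_self N x),
    fun hx => span_le.2 (Set.range_subset_iff.2 (hM.pow_apply_mem hx))⟩

lemma Commute.map_cyc {C : V →ₗ[ℂ] V} (h : Commute C N) (x : V) :
    (cyc N x).map C = cyc N (C x) := by
  rw [cyc, cyc, map_span, ← Set.range_comp]
  congr 2
  funext n
  exact LinearMap.congr_fun (h.pow_right n).eq x

variable (N) in
lemma cyc_apply_eq_map (x : V) : cyc N (N x) = (cyc N x).map N :=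
  ((Commute.refl N).map_cyc x).symm

lemma invSub_cyc (x : V) : InvSub N (cyc N x) := by
  rw [InvSub, ← cyc_apply_eq_map]
  refine span_le.2 (Set.range_subset_iff.2 fun n => ?_)
  rw [← Module.End.mul_apply, ← pow_succ]
  exact pow_apply_mem_cyc N x (n + 1)

variable (N) in
lemma apply_mem_cyc (x : V) : N x ∈ cyc N x :=
  invSub_cyc x (mem_map_of_mem (mem_cyc_self N x))

variable (N) in
lemma cyc_eq_bot_iff (x : V) : cyc N x = ⊥ ↔ x = 0 :=
  le_bot_iff.symm.trans ((cyc_le_iff invSub_bot).trans (mem_bot ℂ))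

variable (N) in
lemma cyc_eq_cyc_apply_sup_span_singleton (x : V) :
    cyc N x = cyc N (N x) ⊔ span ℂ {x} := by
  refine le_antisymm (span_le.2 (Set.range_subset_iff.2 fun n => ?_)) (sup_le ?_ ?_)
  · cases n with
    | zero => simpa using mem_sup_right (mem_span_singleton_self x)
    | succ n =>
      rw [pow_succ, Module.End.mul_apply]
      exact mem_sup_left (pow_apply_mem_cyc N (N x) n)
  · exact (cyc_le_iff (invSub_cyc x)).2 (apply_mem_cyc N x)
  · exact span_singleton_le_iff_mem _ _ |>.2 (mem_cyc_self N x)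

lemma le_of_le_sup_map_of_isNilpotent (hN : IsNilpotent N) {R W : Submodule ℂ V} (hR : InvSub N R)
    (h : W ≤ R ⊔ W.map N) : W ≤ R := by
  obtain ⟨m, hm⟩ := hN
  have hRpow (k : ℕ) : R.map (N ^ k) ≤ R :=
    map_le_iff_le_comap.2 fun _ hx => hR.pow_apply_mem hx k
  have hle_pow (k : ℕ) : W ≤ R ⊔ W.map (N ^ k) := by
    induction k with
    | zero =>
      rw [pow_zero, Module.End.one_eq_id, map_id]
      exact le_sup_right
    | succ k ih =>
      calc W ≤ R ⊔ W.map (N ^ k) := ih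
        _ ≤ R ⊔ (R ⊔ W.map N).map (N ^ k) := sup_le_sup_left (map_mono h) _
        _ = R ⊔ R.map (N ^ k) ⊔ W.map (N ^ (k + 1)) := by
          rw [Submodule.map_sup, ← map_comp, pow_succ, Module.End.mul_eq_comp, sup_assoc]
        _ ≤ R ⊔ W.map (N ^ (k + 1)) := sup_le_sup_right (sup_le le_rfl (hRpow k)) _
  simpa [hm] using hle_pow m

lemma notMem_cyc_apply_sup (hN : IsNilpotent N) {R : Submodule ℂ V} (hR : InvSub N R)
    {x : V} (hx : x ∉ R) : x ∉ cyc N (N x) ⊔ R := by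
  intro h
  refine hx (le_of_le_sup_map_of_isNilpotent hN hR ?_ (mem_cyc_self N x))
  rw [← cyc_apply_eq_map, sup_comm]
  exact (cyc_le_iff ((invSub_cyc _).sup hR)).2 h

lemma notMem_cyc_apply (hN : IsNilpotent N) {x : V} (hx : x ≠ 0) : x ∉ cyc N (N x) := by
  simpa using notMem_cyc_apply_sup hN invSub_bot (R := ⊥) hx

lemma cyc_apply_lt (hN : IsNilpotent N) {x : V} (hx : x ≠ 0) : cyc N (N x) < cyc N x :=
  lt_of_le_not_ge ((cyc_le_iff (invSub_cyc x)).2 (apply_mem_cyc N x))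
    fun h => notMem_cyc_apply hN hx (h (mem_cyc_self N x))

lemma cyc_eq_of_mem_of_notMem (hN : IsNilpotent N) {v w : V} (hv : v ∈ cyc N w)
    (hv' : v ∉ cyc N (N w)) : cyc N v = cyc N w := by
  refine le_antisymm ((cyc_le_iff (invSub_cyc w)).2 hv) ?_
  rw [cyc_eq_cyc_apply_sup_span_singleton N w, Submodule.mem_sup] at hv
  obtain ⟨u, hu, _, hs, rfl⟩ := hv
  obtain ⟨a, rfl⟩ := mem_span_singleton.1 hs
  have ha : a ≠ 0 := by
    rintro rfl
    exact hv' (by simpa using hu)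
  have hw : w ∈ cyc N (u + a • w) ⊔ cyc N (N w) := by
    have := sub_mem (mem_sup_left (smul_mem _ a⁻¹ (mem_cyc_self N (u + a • w))))
      (mem_sup_right (smul_mem _ a⁻¹ hu) : a⁻¹ • u ∈ cyc N (u + a • w) ⊔ cyc N (N w))
    rwa [smul_add, smul_smul, inv_mul_cancel₀ ha, one_smul, add_sub_cancel_left] at this
  refine le_of_le_sup_map_of_isNilpotent hN (invSub_cyc _) ?_
  rw [← cyc_apply_eq_map]
  exact (cyc_le_iff ((invSub_cyc _).sup (invSub_cyc _))).2 hw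

lemma le_cyc_apply_of_lt (hN : IsNilpotent N) {M : Submodule ℂ V} (hM : InvSub N M) {w : V}
    (hlt : M < cyc N w) : M ≤ cyc N (N w) := by
  intro v hv
  by_contra hv'
  refine hlt.not_ge ?_
  rw [← cyc_eq_of_mem_of_notMem hN (hlt.le hv) hv']
  exact (cyc_le_iff hM).2 hv

variable [FiniteDimensional ℂ V]

lemma finrank_cyc_apply_add_one (hN : IsNilpotent N) {x : V} (hx : x ≠ 0) :
    finrank ℂ (cyc N (N x)) + 1 = finrank ℂ (cyc N x) := by
  conv_rhs => rw [cyc_eq_cyc_apply_sup_span_singleton N x]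
  rw [finrank_sup_span_singleton (notMem_cyc_apply hN hx)]

lemma pow_apply_eq_zero_iff (hN : IsNilpotent N) (i : ℕ) (x : V) :
    (N ^ i) x = 0 ↔ finrank ℂ (cyc N x) ≤ i := by
  induction i generalizing x with
  | zero => simp [Submodule.finrank_eq_zero, cyc_eq_bot_iff]
  | succ i ih =>
    by_cases hx : x = 0
    · subst hx
      refine iff_of_true (map_zero _) ?_
      rw [(cyc_eq_bot_iff N (0 : V)).2 rfl, finrank_bot]
      exact Nat.zero_le _
    · rw [pow_succ, Module.End.mul_apply, ih, ← finrank_cyc_apply_add_one hN hx]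
      omega

end Cyclic

section Commutant

variable {V : Type*} [AddCommGroup V] [Module ℂ V] {N : V →ₗ[ℂ] V}

lemma eq_zero_of_forall_mem_range_pow (hN : IsNilpotent N) {w : V}
    (h : ∀ j, w ∈ LinearMap.range (N ^ j)) : w = 0 := by
  obtain ⟨m, hm⟩ := hN
  simpa [hm] using h m

lemma exists_mem_range_pow_notMem_range_pow_succ (hN : IsNilpotent N) {x : V} (hx : x ≠ 0) :
    ∃ u, x ∈ LinearMap.range (N ^ u) ∧ x ∉ LinearMap.range (N ^ (u + 1)) := by
  by_contra! h
  refine hx (eq_zero_of_forall_mem_range_pow hN fun u => ?_)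
  induction u with
  | zero => simp
  | succ u ih => exact h u ih

/- With `x ∈ range N^u \ range N^(u+1)` and `w = N^u t`, there is a functional `f` with
`f x = 1` that kills `N x, N² x, …` and `range N^(u+1)`; then `∑_{a+b=u} N^a (f ⊗ t) N^b`
commutes with `N` and sends `x` to `N^u t`. -/
open Finset in
lemma exists_commute_apply_eq_of_apply_eq_zero (hN : IsNilpotent N) {x w : V} (hw : N w = 0)
    (h : ∀ j, x ∈ LinearMap.range (N ^ j) → w ∈ LinearMap.range (N ^ j)) :
    ∃ C : V →ₗ[ℂ] V, Commute C N ∧ C x = w := by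
  by_cases hx : x = 0
  · refine ⟨0, Commute.zero_left N, ?_⟩
    subst hx
    exact (eq_zero_of_forall_mem_range_pow hN fun j => h j (zero_mem _)).symm
  obtain ⟨u, hxu, hxu'⟩ := exists_mem_range_pow_notMem_range_pow_succ hN hx
  obtain ⟨t, rfl⟩ := h u hxu
  obtain ⟨f, hfx, hfU⟩ := exists_dual_map_eq_bot_of_notMem
    (notMem_cyc_apply_sup hN (invSub_range_pow (u + 1)) hxu') inferInstance
  have hf : ∀ v ∈ cyc N (N x) ⊔ LinearMap.range (N ^ (u + 1)), f v = 0 :=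
    fun v hv => LinearMap.le_ker_iff_map.2 hfU hv
  set E := f.smulRight ((f x)⁻¹ • t)
  refine ⟨∑ p ∈ antidiagonal u, N ^ p.1 * E * N ^ p.2,
    (commute_sum_antidiagonal_pow_mul_pow N E u ?_ ?_).symm, ?_⟩
  · have ht : (N ^ (u + 1)) t = 0 := by rwa [pow_succ', Module.End.mul_apply]
    ext v
    simp [E, ht]
  · ext v
    simp [E, hf _ (mem_sup_right (LinearMap.mem_range_self _ v))]
  · rw [LinearMap.sum_apply, sum_eq_single (u, 0)]
    · simp [E, hfx]
    · rintro ⟨i, j⟩ hij hne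
      obtain ⟨j, rfl⟩ : ∃ k, j = k + 1 := Nat.exists_eq_succ_of_ne_zero (by
        rintro rfl
        simp_all)
      have : f ((N ^ (j + 1)) x) = 0 := by
        refine hf _ (mem_sup_left ?_)
        rw [pow_succ, Module.End.mul_apply]
        exact pow_apply_mem_cyc N (N x) j
      simp [E, this]
    · simp

theorem exists_commute_apply_eq (hN : IsNilpotent N) {x z : V}
    (h : ∀ i j, (N ^ i) x ∈ LinearMap.range (N ^ j) → (N ^ i) z ∈ LinearMap.range (N ^ j)) :
    ∃ C : V →ₗ[ℂ] V, Commute C N ∧ C x = z := by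
  obtain ⟨m, hm⟩ := id hN
  have hx : (N ^ m) x = 0 := by simp [hm]
  clear hm
  induction m generalizing x z with
  | zero =>
    refine ⟨0, Commute.zero_left N, ?_⟩
    rw [pow_zero, Module.End.one_apply] at hx
    subst hx
    exact (eq_zero_of_forall_mem_range_pow hN fun j => by simpa using h 0 j (by simp)).symm
  | succ n ih =>
    obtain ⟨C₁, hC₁, hC₁x⟩ := ih (x := N x) (z := N z)
      (fun i j => by simpa only [← Module.End.mul_apply, ← pow_succ] using h (i + 1) j)
      (by rwa [← Module.End.mul_apply, ← pow_succ])
    have hw : N (z - C₁ x) = 0 := by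
      rw [map_sub, ← hC₁x, ← Module.End.mul_apply, hC₁.eq, Module.End.mul_apply, sub_self]
    have hdom (j : ℕ) (hj : x ∈ LinearMap.range (N ^ j)) :
        z - C₁ x ∈ LinearMap.range (N ^ j) :=
      sub_mem (by simpa using h 0 j (by simpa using hj)) (hC₁.apply_mem_range_pow hj)
    obtain ⟨C₂, hC₂, hC₂x⟩ := exists_commute_apply_eq_of_apply_eq_zero hN hw hdom
    refine ⟨C₁ + C₂, hC₁.add_left hC₂, ?_⟩
    rw [LinearMap.add_apply, hC₂x, add_sub_cancel]

end Commutant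

section Collineation

variable {V : Type*} [AddCommGroup V] [Module ℂ V] {N T : V →ₗ[ℂ] V}

lemma col_iff_map_cyc (hT : Function.Bijective T) :
    Col N T ↔ ∀ v, (cyc N v).map T = cyc N (T v) := by
  constructor
  · rintro ⟨-, hcol⟩ v
    have hpre : InvSub N ((cyc N (T v)).comap T) := by
      rw [hcol, map_comap_eq_of_surjective hT.2]
      exact invSub_cyc _
    refine le_antisymm ?_ ?_
    · exact map_le_iff_le_comap.2 ((cyc_le_iff hpre).2 (mem_cyc_self N (T v)))
    · exact (cyc_le_iff ((hcol _).1 (invSub_cyc v))).2 (mem_map_of_mem (mem_cyc_self N v))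
  · refine fun hcyc => ⟨hT, fun M => ⟨fun hM => ?_, fun hTM => ?_⟩⟩
    · rintro _ ⟨_, ⟨v, hv, rfl⟩, rfl⟩
      have : N (T v) ∈ (cyc N v).map T := hcyc v ▸ apply_mem_cyc N (T v)
      exact map_mono ((cyc_le_iff hM).2 hv) this
    · rintro _ ⟨v, hv, rfl⟩
      have : (cyc N v).map T ≤ M.map T := hcyc v ▸ (cyc_le_iff hTM).2 (mem_map_of_mem hv)
      exact (map_le_map_iff_of_injective hT.1 _ _).1 this (apply_mem_cyc N v)

lemma finrank_map_of_injective (hT : Function.Injective T)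
    (p : Submodule ℂ V) : finrank ℂ (p.map T) = finrank ℂ p :=
  (equivMapOfInjective T hT p).finrank_eq.symm

lemma map_cyc_of_forall_exists_commute [FiniteDimensional ℂ V] (hN : IsNilpotent N)
    (hT : Function.Injective T)
    (H : ∀ x, ∃ C : V →ₗ[ℂ] V, Commute C N ∧ (cyc N x).map T = (cyc N x).map C)
    (v : V) :
    (cyc N v).map T = cyc N (T v) := by
  by_cases hv : v = 0
  · simp [hv, (cyc_eq_bot_iff N (0 : V)).2 rfl]
  obtain ⟨C, hC, hTC⟩ := H v
  obtain ⟨C', hC', hTC'⟩ := H (N v)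
  rw [hC.map_cyc] at hTC
  rw [hC'.map_cyc] at hTC'
  have hTv : T v ∈ cyc N (C v) := hTC ▸ mem_map_of_mem (mem_cyc_self N v)
  have hCv : C v ≠ 0 := by
    rintro h0
    rw [h0, (cyc_eq_bot_iff N (0 : V)).2 rfl, mem_bot] at hTv
    exact hv (hT (hTv.trans (map_zero T).symm))
  have hlt : (cyc N (N v)).map T < cyc N (C v) :=
    hTC ▸ map_strictMono_of_injective hT (cyc_apply_lt hN hv)
  have hle := le_cyc_apply_of_lt hN (hTC' ▸ invSub_cyc _) hlt
  have heq : (cyc N (N v)).map T = cyc N (N (C v)) := by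
    refine eq_of_le_of_finrank_le hle ?_
    have h₁ := finrank_cyc_apply_add_one hN hv
    have h₂ := finrank_cyc_apply_add_one hN hCv
    rw [← hTC, finrank_map_of_injective hT] at h₂
    rw [finrank_map_of_injective hT]
    omega
  rw [hTC]
  refine (cyc_eq_of_mem_of_notMem hN hTv ?_).symm
  rw [← heq]
  rintro ⟨u, hu, huv⟩
  exact notMem_cyc_apply hN hv (hT huv ▸ hu)

variable (hN : IsNilpotent N) (hT : Function.Injective T)
  (hcyc : ∀ v, (cyc N v).map T = cyc N (T v))
include hN hT hcyc

lemma cyc_apply_pow_le_of_map_cyc (d : ℕ) (u : V) :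
    cyc N (T ((N ^ d) u)) ≤ cyc N ((N ^ d) (T u)) := by
  have hone (u : V) : cyc N (T (N u)) ≤ cyc N (N (T u)) := by
    by_cases hu : u = 0
    · simp [hu, (cyc_eq_bot_iff N (0 : V)).2 rfl]
    refine le_cyc_apply_of_lt hN (invSub_cyc _) ?_
    rw [← hcyc, ← hcyc]
    exact map_strictMono_of_injective hT (cyc_apply_lt hN hu)
  induction d generalizing u with
  | zero => simp
  | succ d ih =>
    calc cyc N (T ((N ^ (d + 1)) u)) = cyc N (T (N ((N ^ d) u))) := by
          rw [pow_succ', Module.End.mul_apply]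
      _ ≤ cyc N (N (T ((N ^ d) u))) := hone _
      _ = (cyc N (T ((N ^ d) u))).map N := cyc_apply_eq_map N _
      _ ≤ (cyc N ((N ^ d) (T u))).map N := map_mono (ih u)
      _ = cyc N ((N ^ (d + 1)) (T u)) := by
          rw [← cyc_apply_eq_map, pow_succ', Module.End.mul_apply]

variable [FiniteDimensional ℂ V]

lemma pow_apply_eq_zero_of_map_cyc {i : ℕ} {v : V} (hv : (N ^ i) v = 0) :
    (N ^ i) (T v) = 0 := by
  rw [pow_apply_eq_zero_iff hN] at hv ⊢
  rwa [← hcyc, finrank_map_of_injective hT]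

lemma pow_apply_mem_range_pow_of_map_cyc {x : V} {i j : ℕ}
    (h : (N ^ i) x ∈ LinearMap.range (N ^ j)) : (N ^ i) (T x) ∈ LinearMap.range (N ^ j) := by
  rcases le_or_gt j i with hji | hij
  · refine ⟨(N ^ (i - j)) (T x), ?_⟩
    rw [← Module.End.mul_apply, ← pow_add, Nat.add_sub_cancel' hji]
  obtain ⟨d, rfl⟩ := Nat.exists_eq_add_of_le hij.le
  obtain ⟨y, hy⟩ := h
  have hker : (N ^ i) (x - (N ^ d) y) = 0 := by
    rw [map_sub, ← Module.End.mul_apply, ← pow_add, hy, sub_self]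
  obtain ⟨y', hy'⟩ : T ((N ^ d) y) ∈ LinearMap.range (N ^ d) :=
    (cyc_le_iff (invSub_range_pow d)).2 (LinearMap.mem_range_self _ _)
      (cyc_apply_pow_le_of_map_cyc hN hT hcyc d y (mem_cyc_self N _))
  refine ⟨y', ?_⟩
  have := pow_apply_eq_zero_of_map_cyc hN hT hcyc hker
  rw [map_sub, map_sub, sub_eq_zero, ← hy'] at this
  rw [this, ← Module.End.mul_apply, ← pow_add]

end Collineation

theorem stmt15 {V : Type*} [AddCommGroup V] [Module ℂ V] [FiniteDimensional ℂ V]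
    (N T : V →ₗ[ℂ] V) (hN : IsNilpotent N) (hT : Function.Bijective T) :
    Col N T ↔
      ∀ x : V, ∃ C : V →ₗ[ℂ] V, C ∘ₗ N = N ∘ₗ C ∧
        (cyc N x).map T = (cyc N x).map C := by
  rw [col_iff_map_cyc hT]
  constructor
  · intro hcyc x
    obtain ⟨C, hC, hCx⟩ := exists_commute_apply_eq hN fun _ _ =>
      pow_apply_mem_range_pow_of_map_cyc hN hT.1 hcyc
    exact ⟨C, hC, by rw [hC.map_cyc, hCx, hcyc]⟩
  · exact fun H => map_cyc_of_forall_exists_commute hN hT.1 H
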